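/- Let R be a commutative unital ring and i : (M,F) → (N,F) a morphism of filtered cochain complexes of R-modules which has the left lifting property with respect to every filtered morphism p such that all restrictions F^k p are degreewise surjective. Then i is a filtered weak equivalence — H^n(F^k i) is an isomorphism for all n ∈ ℤ and k ∈ ℕ — and i has the left lifting property with respect to every filtered morphism p such that each restriction F^k p is a degreewise surjective quasi-isomorphism. -/

import Mathlib

open CategoryTheory Limits ZeroObject

noncomputable section

variable (R : Type) [CommRing R]

/-- The category of unbounded cochain complexes of `R`-modules. -/
abbrev Cx := CochainComplex (ModuleCat.{0} R) ℤ



/-- The underlying module of `D_R(n)` in degree `i`: it is (isomorphic to) `R` if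
`i = n` or `i = n+1`, and the zero module otherwise. -/
abbrev diskFun (n i : ℤ) : Type := PLift (i = n ∨ i = n + 1) → R

/-- The differential of the disk complex `D_R(n)`. -/
def diskD (n i j : ℤ) : (diskFun R n i) →ₗ[R] (diskFun R n j) where
  toFun f _ := if hij : i = n ∧ j = n + 1 then f ⟨Or.inl hij.1⟩ else 0
  map_add' f g := by
    funext h
    by_cases hij : i = n ∧ j = n + 1 <;> simp [hij]
  map_smul' r f := by
    funext h
    by_cases hij : i = n ∧ j = n + 1 <;> simp [hij]

lemma diskD_apply (n i j : ℤ) (f : diskFun R n i) (h : PLift (j = n ∨ j = n + 1)) :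
    diskD R n i j f h = if hij : i = n ∧ j = n + 1 then f ⟨Or.inl hij.1⟩ else 0 := rfl

/-- The disk complex `D_R(n)`, with `R` in degrees `n` and `n+1`, the identity as the only
non-trivial differential, and `0` elsewhere. -/
def disk (n : ℤ) : Cx R where
  X i := ModuleCat.of R (diskFun R n i)
  d i j := ModuleCat.ofHom (diskD R n i j)
  shape i j hij := by
    apply ModuleCat.hom_ext
    apply LinearMap.ext
    intro f
    funext h
    have hn : ¬ (i = n ∧ j = n + 1) := by
      rintro ⟨rfl, rfl⟩
      exact hij rfl
    show diskD R n i j f h = _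
    rw [diskD_apply, dif_neg hn]
    rfl
  d_comp_d' i j k _ _ := by
    apply ModuleCat.hom_ext
    apply LinearMap.ext
    intro f
    funext h
    show diskD R n j k (diskD R n i j f) h = _
    rw [diskD_apply]
    split_ifs with hjk
    · rw [diskD_apply]
      have hn : ¬ (i = n ∧ j = n + 1) := by
        obtain ⟨h1, h2⟩ := hjk
        rintro ⟨rfl, h3⟩
        omega
      rw [dif_neg hn]
      rfl
    · rfl

/-- The underlying module of `S_R(n)` in degree `i`. -/
abbrev sphereFun (n i : ℤ) : Type := PLift (i = n) → R

/-- The sphere complex `S_R(n)`, with `R` in degree `n` and `0` elsewhere. -/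
def sphere (n : ℤ) : Cx R where
  X i := ModuleCat.of R (sphereFun R n i)
  d _ _ := 0
  shape _ _ _ := rfl
  d_comp_d' := by intros; simp

/-- The degreewise component of the map `S_R(n+1) ⟶ D_R(n)`. -/
def sphereToDiskHom (n i : ℤ) : (sphereFun R (n + 1) i) →ₗ[R] (diskFun R n i) where
  toFun g _ := if hi : i = n + 1 then g ⟨hi⟩ else 0
  map_add' g₁ g₂ := by
    funext h
    by_cases hi : i = n + 1 <;> simp [hi]
  map_smul' r g := by
    funext h
    by_cases hi : i = n + 1 <;> simp [hi]

lemma sphereToDiskHom_apply (n i : ℤ) (g : sphereFun R (n + 1) i)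
    (h : PLift (i = n ∨ i = n + 1)) :
    sphereToDiskHom R n i g h = if hi : i = n + 1 then g ⟨hi⟩ else 0 := rfl

/-- The map `S_R(n+1) ⟶ D_R(n)` which is the identity of `R` in degree `n+1`. -/
def sphereToDisk (n : ℤ) : sphere R (n + 1) ⟶ disk R n where
  f i := ModuleCat.ofHom (sphereToDiskHom R n i)
  comm' i j _ := by
    apply ModuleCat.hom_ext
    apply LinearMap.ext
    intro g
    funext h
    show diskD R n i j (sphereToDiskHom R n i g) h = sphereToDiskHom R n j ((0 : _ →ₗ[R] _) g) h
    simp only [LinearMap.zero_apply, map_zero, Pi.zero_apply]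
    rw [diskD_apply]
    split_ifs with hij
    · show (if hi : i = n + 1 then (g : sphereFun R (n + 1) i) ⟨hi⟩ else 0) = 0
      have hn : ¬ i = n + 1 := by
        obtain ⟨h1, h2⟩ := hij
        omega
      rw [dif_neg hn]
    · rfl

/-- A map of cochain complexes is degreewise surjective if it is surjective in each degree. -/
def DegSurj {M N : Cx R} (p : M ⟶ N) : Prop := ∀ n : ℤ, Function.Surjective (p.f n)


/-- A filtered cochain complex of `R`-modules: a cochain complex `C` together with a
decreasing `ℕ`-indexed filtration by subcomplexes `C = F⁰C ⊇ F¹C ⊇ F²C ⊇ ⋯`. -/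
structure FCx where
  /-- the underlying cochain complex -/
  C : Cx R
  /-- the filtration, given degreewise by submodules -/
  F : ℕ → ∀ i : ℤ, Submodule R (C.X i)
  /-- the filtration is decreasing -/
  antitone : ∀ p q : ℕ, p ≤ q → ∀ i : ℤ, F q i ≤ F p i
  /-- `F⁰C = C` -/
  zero_top : ∀ i : ℤ, F 0 i = ⊤
  /-- each filtration level is a subcomplex -/
  d_stable : ∀ (p : ℕ) (i j : ℤ), ∀ x ∈ F p i, C.d i j x ∈ F p j

/-- A morphism of filtered cochain complexes: a cochain map preserving the filtrations. -/
@[ext]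
structure FHom (M N : FCx R) where
  /-- the underlying cochain map -/
  φ : M.C ⟶ N.C
  /-- compatibility with the filtrations -/
  preserves : ∀ (p : ℕ) (i : ℤ), ∀ x ∈ M.F p i, φ.f i x ∈ N.F p i

/-- The category of filtered cochain complexes of `R`-modules. -/
instance : Category (FCx R) where
  Hom M N := FHom R M N
  id M := ⟨𝟙 M.C, fun p i x hx => by simpa using hx⟩
  comp f g := ⟨f.φ ≫ g.φ, fun p i x hx => by
    have h1 := f.preserves p i x hx
    have h2 := g.preserves p i _ h1
    simpa using h2⟩
  id_comp f := by apply FHom.ext; simp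
  comp_id f := by apply FHom.ext; simp
  assoc f g h := by apply FHom.ext; simp

@[simp] lemma comp_φ {M N P : FCx R} (f : M ⟶ N) (g : N ⟶ P) :
    (f ≫ g).φ = f.φ ≫ g.φ := rfl

/-- The `p`-th level `F^p M` of the filtration, as a cochain complex. -/
def FCx.level {R : Type} [CommRing R] (M : FCx R) (p : ℕ) : Cx R where
  X i := ModuleCat.of R (M.F p i)
  d i j := ModuleCat.ofHom (LinearMap.restrict (M.C.d i j).hom (fun x hx => M.d_stable p i j x hx))
  shape i j hij := by
    apply ModuleCat.hom_ext
    apply LinearMap.ext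
    intro x
    apply Subtype.ext
    show M.C.d i j x.1 = _
    rw [M.C.shape i j hij]
    rfl
  d_comp_d' i j k _ _ := by
    apply ModuleCat.hom_ext
    apply LinearMap.ext
    intro x
    apply Subtype.ext
    show M.C.d j k (M.C.d i j x.1) = _
    have h0 : M.C.d i j ≫ M.C.d j k = 0 := M.C.d_comp_d i j k
    have h1 : M.C.d j k (M.C.d i j x.1) = (M.C.d i j ≫ M.C.d j k) x.1 := rfl
    rw [h1, h0]
    rfl

/-- The restriction `F^p f : F^p M ⟶ F^p N` of a filtered morphism to the `p`-th filtration
levels. -/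
def levelMap {R : Type} [CommRing R] {M N : FCx R} (f : M ⟶ N) (p : ℕ) :
    M.level p ⟶ N.level p where
  f i := ModuleCat.ofHom (LinearMap.restrict (f.φ.f i).hom (fun x hx => f.preserves p i x hx))
  comm' i j _ := by
    apply ModuleCat.hom_ext
    apply LinearMap.ext
    intro x
    apply Subtype.ext
    show N.C.d i j (f.φ.f i x.1) = f.φ.f j (M.C.d i j x.1)
    have h : (f.φ.f i ≫ N.C.d i j) x.1 = (M.C.d i j ≫ f.φ.f j) x.1 := by
      rw [f.φ.comm i j]
    exact h

/-- A filtered morphism is a (projective) fibration if each `F^p f` is degreewise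
surjective. -/
def FFib {M N : FCx R} (f : M ⟶ N) : Prop :=
  ∀ (p : ℕ) (i : ℤ), Function.Surjective ((levelMap f p).f i)

/-- A filtered morphism is a filtered weak equivalence if each `F^p f` is a
quasi-isomorphism, i.e. `H^n (F^p f)` is an isomorphism for all `n` and `p`. -/
def FWeq {M N : FCx R} (f : M ⟶ N) : Prop :=
  ∀ p : ℕ, QuasiIso (levelMap f p)

/-- The filtered disk `D_R(n,p)`: the complex `D_R(n)` with filtration which is everything
in filtration degrees `k ≤ p` and zero above. -/
def fdisk (n : ℤ) (p : ℕ) : FCx R where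
  C := disk R n
  F k _ := if k ≤ p then ⊤ else ⊥
  antitone a b hab i := by
    by_cases hb : b ≤ p
    · have ha : a ≤ p := le_trans hab hb
      simp [ha, hb]
    · simp [hb]
  zero_top i := by simp
  d_stable k i j x hx := by
    by_cases hk : k ≤ p
    · simp [hk]
    · simp only [if_neg hk, Submodule.mem_bot] at hx ⊢
      rw [hx]
      exact map_zero _

/-- The filtered sphere `S_R(n,p)`. -/
def fsphere (n : ℤ) (p : ℕ) : FCx R where
  C := sphere R n
  F k _ := if k ≤ p then ⊤ else ⊥
  antitone a b hab i := by
    by_cases hb : b ≤ p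
    · have ha : a ≤ p := le_trans hab hb
      simp [ha, hb]
    · simp [hb]
  zero_top i := by simp
  d_stable k i j x hx := by
    by_cases hk : k ≤ p
    · simp [hk]
    · simp only [if_neg hk, Submodule.mem_bot] at hx ⊢
      rw [hx]
      exact map_zero _

/-- The filtered map `S_R(n+1,p) ⟶ D_R(n,p)`. -/
def fsphereToDisk (n : ℤ) (p : ℕ) : fsphere R (n + 1) p ⟶ fdisk R n p where
  φ := sphereToDisk R n
  preserves k i x hx := by
    by_cases hk : k ≤ p
    · show _ ∈ (if k ≤ p then ⊤ else ⊥ : Submodule R ((disk R n).X i))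
      rw [if_pos hk]
      exact Submodule.mem_top
    · show _ ∈ (if k ≤ p then ⊤ else ⊥ : Submodule R ((disk R n).X i))
      rw [if_neg hk]
      replace hx : x = 0 := by
        simp only [fsphere, if_neg hk] at hx
        exact (Submodule.mem_bot R).mp hx
      rw [hx, map_zero]
      exact Submodule.zero_mem _

/-- The zero filtered complex. -/
def fzero : FCx R where
  C := 0
  F _ _ := ⊤
  antitone _ _ _ _ := le_refl _
  zero_top _ := rfl
  d_stable _ _ _ _ _ := Submodule.mem_top

/-- The unique (zero) filtered map from the zero filtered complex. -/
def fromFZero (M : FCx R) : fzero R ⟶ M where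
  φ := 0
  preserves p i x _ := by
    have h : ((0 : (fzero R).C ⟶ M.C).f i) x = 0 := by
      rw [HomologicalComplex.zero_f]
      rfl
    rw [h]
    exact (M.F p i).zero_mem


/-- `f` is a retract of `g` in the arrow category: there are morphisms of arrows
`f → g → f` composing to the identity of `f`. -/
def IsRetractOf {C : Type 1} [Category.{0} C] {X Y X' Y' : C} (f : X ⟶ Y) (g : X' ⟶ Y') : Prop :=
  ∃ (i : Arrow.mk f ⟶ Arrow.mk g) (r : Arrow.mk g ⟶ Arrow.mk f), i ≫ r = 𝟙 (Arrow.mk f)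

/-- A cochain complex `A` is cofibrant if `0 ⟶ A` has the left lifting property with respect
to every degreewise surjective quasi-isomorphism. -/
def Cofibrant (A : Cx R) : Prop :=
  ∀ {X Y : Cx R} (p : X ⟶ Y), (∀ n : ℤ, Function.Surjective (p.f n)) → QuasiIso p →
    HasLiftingProperty (0 : (0 : Cx R) ⟶ A) p

/-- A filtered morphism is a cofibration if it has the left lifting property with respect to
every filtered trivial fibration, i.e. every filtered morphism which is in each filtration
level a degreewise surjective quasi-isomorphism. -/
def FCofib {M N : FCx R} (i : M ⟶ N) : Prop :=
  ∀ {X Y : FCx R} (p : X ⟶ Y), FFib R p → FWeq R p → HasLiftingProperty i p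

/-- A filtered complex `A` is cofibrant if `0 ⟶ A` has the left lifting property with
respect to every filtered trivial fibration. -/
def FCofibrant (A : FCx R) : Prop :=
  ∀ {X Y : FCx R} (p : X ⟶ Y), FFib R p → FWeq R p → HasLiftingProperty (fromFZero R A) p

/-! Lifting `i` against the fibration `M ⟶ 0` gives a retraction `r` of `i`. Lifting it against
the endpoint map `P N ⟶ N` of the path space `(P N)^n = N^n × N^(n-1)`, with the product
filtration, along `𝟙 - r ≫ i` gives a filtered null-homotopy of `𝟙 - r ≫ i`. Hence every
`F^k i` is a homotopy equivalence, so a quasi-isomorphism. -/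

namespace FHom

variable {R} {M N : FCx R}

@[simp] lemma id_φ : (𝟙 M : M ⟶ M).φ = 𝟙 M.C := rfl

instance : Zero (M ⟶ N) := ⟨⟨0, fun k n _ _ => (N.F k n).zero_mem⟩⟩

instance : Sub (M ⟶ N) :=
  ⟨fun f g => ⟨f.φ - g.φ, fun k n x hx => (N.F k n).sub_mem (f.preserves k n x hx)
    (g.preserves k n x hx)⟩⟩

@[simp] lemma zero_φ : (0 : M ⟶ N).φ = 0 := rfl

@[simp] lemma sub_φ (f g : M ⟶ N) : (f - g).φ = f.φ - g.φ := rfl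

end FHom

section levelMap

variable {R} {M N P : FCx R}

@[simp] lemma levelMap_id (k : ℕ) : levelMap (𝟙 M) k = 𝟙 (M.level k) := rfl

@[simp] lemma levelMap_comp (f : M ⟶ N) (g : N ⟶ P) (k : ℕ) :
    levelMap (f ≫ g) k = levelMap f k ≫ levelMap g k := rfl

end levelMap

section toFZero

variable {R}

def toFZero (M : FCx R) : M ⟶ fzero R := ⟨0, fun _ _ _ _ => trivial⟩

lemma ffib_toFZero (M : FCx R) : FFib R (toFZero M) := by
  intro k n y
  refine ⟨0, Subtype.ext ?_⟩
  have : Subsingleton ((fzero R).C.X n) := ModuleCat.subsingleton_of_isZero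
    ((HomologicalComplex.eval _ _ n).map_isZero (isZero_zero _))
  exact Subsingleton.elim _ _

lemma exists_retraction_of_hasLiftingProperty {M N : FCx R} (i : M ⟶ N)
    [HasLiftingProperty i (toFZero M)] : ∃ r : N ⟶ M, i ≫ r = 𝟙 M :=
  have sq : CommSq (𝟙 M) i (toFZero M) (toFZero N) := ⟨FHom.ext (by simp [toFZero])⟩
  ⟨sq.lift, sq.fac_left⟩

end toFZero

namespace Cx

variable {R} (K : Cx R)

lemma XIsoOfEq_hom_d_apply {a b b' : ℤ} (h : b = b') (x : K.X a) :
    (K.XIsoOfEq h).hom (K.d a b x) = K.d a b' x := by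
  subst h; rfl

lemma d_XIsoOfEq_hom_apply {a a' b : ℤ} (h : a = a') (x : K.X a) :
    K.d a' b ((K.XIsoOfEq h).hom x) = K.d a b x := by
  subst h; rfl

lemma XIsoOfEq_hom_XIsoOfEq_hom_apply {a b c : ℤ} (h : a = b) (h' : b = c) (x : K.X a) :
    (K.XIsoOfEq h').hom ((K.XIsoOfEq h).hom x) = (K.XIsoOfEq (h.trans h')).hom x := by
  subst h h'; rfl

lemma d_d_apply (a b c : ℤ) (x : K.X a) : K.d b c (K.d a b x) = 0 := by
  rw [← ConcreteCategory.comp_apply, K.d_comp_d]; rfl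

def castOfRel (a b : ℤ) : K.X a →ₗ[R] K.X (b - 1) :=
  if h : a = b - 1 then (K.XIsoOfEq h).hom.hom else 0

lemma castOfRel_of_rel {a b : ℤ} (h : a + 1 = b) :
    K.castOfRel a b = (K.XIsoOfEq (by omega : a = b - 1)).hom.hom :=
  dif_pos _

def pathSpaceD (a b : ℤ) : K.X a × K.X (a - 1) →ₗ[R] K.X b × K.X (b - 1) :=
  ((K.d a b).hom ∘ₗ LinearMap.fst R _ _).prod
    (K.castOfRel a b ∘ₗ LinearMap.fst R _ _ - (K.d (a - 1) (b - 1)).hom ∘ₗ LinearMap.snd R _ _)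

lemma pathSpaceD_apply (a b : ℤ) (v : K.X a × K.X (a - 1)) :
    K.pathSpaceD a b v = (K.d a b v.1, K.castOfRel a b v.1 - K.d (a - 1) (b - 1) v.2) := rfl

/-- The complex of paths in `K` starting at `0`: in degree `n` it is `K^n × K^(n-1)`, with
differential `(x, h) ↦ (dx, x - dh)`. -/
def pathSpace : Cx R where
  X n := ModuleCat.of R (K.X n × K.X (n - 1))
  d a b := ModuleCat.ofHom (K.pathSpaceD a b)
  shape a b hab := by
    have hab' : ¬ a = b - 1 := fun h => hab (by simp; omega)
    have hab'' : ¬ (ComplexShape.up ℤ).Rel (a - 1) (b - 1) := fun h => hab (by simp at h ⊢; omega)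
    refine ModuleCat.hom_ext (LinearMap.ext fun v => ?_)
    simp [pathSpaceD_apply, K.shape a b hab, K.shape _ _ hab'', castOfRel, dif_neg hab']
  d_comp_d' a b c hab hbc := by
    refine ModuleCat.hom_ext (LinearMap.ext fun v => ?_)
    refine Prod.ext (K.d_d_apply a b c v.1) ?_
    simp only [pathSpaceD_apply, ModuleCat.hom_comp, LinearMap.comp_apply, ModuleCat.hom_ofHom,
      K.castOfRel_of_rel hab, K.castOfRel_of_rel hbc, map_sub, ModuleCat.hom_zero]
    rw [XIsoOfEq_hom_d_apply, d_XIsoOfEq_hom_apply, d_d_apply, sub_zero, sub_self]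
    rfl

lemma XIsoOfEq_hom_pathSpaceD_succ_snd (n : ℤ) (v : K.X n × K.X (n - 1)) (h : n + 1 - 1 = n) :
    (K.XIsoOfEq h).hom (K.pathSpaceD n (n + 1) v).2 = v.1 - K.d (n - 1) n v.2 := by
  rw [pathSpaceD_apply, K.castOfRel_of_rel rfl, map_sub, XIsoOfEq_hom_XIsoOfEq_hom_apply,
    XIsoOfEq_hom_d_apply]
  rfl

/-- A chain map `s = (f, H)` into the path space is a null-homotopy `f = Hd + dH`. -/
lemma fst_eq_of_hom_pathSpace {L : Cx R} (s : L ⟶ K.pathSpace) (n : ℤ) (x : L.X n) :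
    (s.f n x).1 = (K.XIsoOfEq (by omega)).hom (s.f (n + 1) (L.d n (n + 1) x)).2
      + K.d (n - 1) n (s.f n x).2 := by
  have hs : s.f (n + 1) (L.d n (n + 1) x) = K.pathSpaceD n (n + 1) (s.f n x) := by
    rw [← ConcreteCategory.comp_apply, ← s.comm]; rfl
  rw [hs, K.XIsoOfEq_hom_pathSpaceD_succ_snd n (s.f n x)]
  abel

end Cx

namespace FCx

section

variable {R} (N : FCx R)

lemma XIsoOfEq_hom_mem {k : ℕ} {a b : ℤ} (h : a = b) {x : N.C.X a} (hx : x ∈ N.F k a) :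
    (N.C.XIsoOfEq h).hom x ∈ N.F k b := by
  subst h; exact hx

lemma castOfRel_mem {k : ℕ} (a b : ℤ) {x : N.C.X a} (hx : x ∈ N.F k a) :
    N.C.castOfRel a b x ∈ N.F k (b - 1) := by
  unfold Cx.castOfRel
  split_ifs with h
  · exact N.XIsoOfEq_hom_mem h hx
  · exact (N.F k (b - 1)).zero_mem

def pathSpace : FCx R where
  C := N.C.pathSpace
  F k n := (N.F k n).prod (N.F k (n - 1))
  antitone p q hpq n := Submodule.prod_mono (N.antitone p q hpq n) (N.antitone p q hpq (n - 1))
  zero_top n := by rw [N.zero_top, N.zero_top, Submodule.prod_top]; rfl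
  d_stable k a b v hv :=
    Submodule.mem_prod.2 ⟨N.d_stable k a b _ hv.1, (N.F k (b - 1)).sub_mem
      (N.castOfRel_mem a b hv.1) (N.d_stable k (a - 1) (b - 1) _ hv.2)⟩

def endpoint : N.pathSpace ⟶ N where
  φ := { f n := ModuleCat.ofHom (LinearMap.fst R _ _) }
  preserves _ _ _ hv := hv.1

lemma ffib_endpoint : FFib R N.endpoint := by
  intro k n x
  exact ⟨⟨(x.1, 0), x.2, (N.F k (n - 1)).zero_mem⟩, rfl⟩

end

variable {R} {A N : FCx R}

def pathSpaceHomotopyHom (s : A ⟶ N.pathSpace) (k : ℕ) (a b : ℤ) (h : a - 1 = b) :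
    (A.level k).X a ⟶ (N.level k).X b :=
  ModuleCat.ofHom (LinearMap.restrict
    ((N.C.XIsoOfEq h).hom.hom ∘ₗ LinearMap.snd R _ _ ∘ₗ (s.φ.f a).hom)
    fun x hx => N.XIsoOfEq_hom_mem h (s.preserves k a x hx).2)

lemma levelMap_comp_endpoint (s : A ⟶ N.pathSpace) (k : ℕ) :
    levelMap (s ≫ N.endpoint) k = Homotopy.nullHomotopicMap'
      fun a b hba => pathSpaceHomotopyHom s k a b (by simp at hba; omega) := by
  ext n x : 3
  rw [Homotopy.nullHomotopicMap'_f (c := ComplexShape.up ℤ) (k₂ := n - 1) (k₀ := n + 1)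
    (by simp) (by simp)]
  exact Subtype.ext (N.C.fst_eq_of_hom_pathSpace s.φ n x.1)

def homotopyOfHomPathSpace (s : A ⟶ N.pathSpace) (k : ℕ) :
    Homotopy (levelMap (s ≫ N.endpoint) k) 0 :=
  (Homotopy.ofEq (levelMap_comp_endpoint s k)).trans (Homotopy.nullHomotopy' _)

end FCx

section retraction

variable {R} {M N : FCx R}

def homotopyOfHasLiftingProperty (i : M ⟶ N) (r : N ⟶ M) (hr : i ≫ r = 𝟙 M)
    [HasLiftingProperty i N.endpoint] (k : ℕ) :
    Homotopy (𝟙 (N.level k)) (levelMap r k ≫ levelMap i k) :=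
  have hφ : i.φ ≫ r.φ = 𝟙 M.C := congrArg FHom.φ hr
  have sq : CommSq 0 i N.endpoint (𝟙 N - r ≫ i) :=
    ⟨FHom.ext (by simp [Preadditive.comp_sub, reassoc_of% hφ])⟩
  Homotopy.equivSubZero.symm <|
    (Homotopy.ofEq (by rw [sq.fac_right]; rfl)).trans (FCx.homotopyOfHomPathSpace sq.lift k)

def levelHomotopyEquiv (i : M ⟶ N) (r : N ⟶ M) (hr : i ≫ r = 𝟙 M)
    [HasLiftingProperty i N.endpoint] (k : ℕ) : HomotopyEquiv (M.level k) (N.level k) where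
  hom := levelMap i k
  inv := levelMap r k
  homotopyHomInvId := Homotopy.ofEq (by rw [← levelMap_comp, hr, levelMap_id])
  homotopyInvHomId := (homotopyOfHasLiftingProperty i r hr k).symm

end retraction

theorem statement_13 {M N : FCx R} (i : M ⟶ N)
    (h : ∀ {X Y : FCx R} (p : X ⟶ Y), FFib R p → HasLiftingProperty i p) :
    FWeq R i ∧
      (∀ {X Y : FCx R} (p : X ⟶ Y), FFib R p → FWeq R p → HasLiftingProperty i p) := by
  refine ⟨fun k => ?_, fun p hp _ => h p hp⟩
  have := h _ (ffib_toFZero M)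
  have := h _ N.ffib_endpoint
  obtain ⟨r, hr⟩ := exists_retraction_of_hasLiftingProperty i
  exact (levelHomotopyEquiv i r hr k).quasiIso_hom
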